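/- Let N ≥ 1, M ≥ 2 be integers, T_sym > 0, and let u_{n,m}, p_{n,m} be real numbers for 0 ≤ n ≤ N−1, 0 ≤ m ≤ M−1. Define G : ℝ → ℝ by G(f) = |Σ_{m=0}^{M−1} Σ_{n=0}^{N−1} u_{n,m} p_{n,m} e^{i2π m f T_sym}|². Then G is differentiable, and at f₀ = 1/(2MT_sym) its derivative is G′(f₀) = 4πT_sym · Σ_{n=0}^{N−1} Σ_{n'=0}^{N−1} Σ_{0 ≤ m < m' ≤ M−1} u_{n,m} u_{n',m'} p_{n,m} p_{n',m'} (m'−m) sin((m−m')π/M). In particular, if u_{n,m} ∈ {0,1}, p_{n,m} ≥ 0, and there exist (n₁,m₁), (n₂,m₂) with m₁ ≠ m₂ and u_{n₁,m₁} p_{n₁,m₁} > 0, u_{n₂,m₂} p_{n₂,m₂} > 0, then G′(f₀) < 0. -/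

import Mathlib

/-!
With `c m = ∑ n, u n m * p n m`, the function is
`G f = ∑ m, ∑ m', c m * c m' * cos (2π Tsym (m - m') f)`, so `G'` is an explicit sine sum, and
pairing `(m, m')` with `(m', m)` folds it onto the strict upper triangle `m < m'`. At `f₀` the sine
arguments `(m - m') π / M` lie in `(-π, 0)`, so every term is `≤ 0` once `c ≥ 0`, and the term of
the two given symbols is `< 0`.
-/

open Real Finset

theorem sq_norm_sum_ofReal_mul_exp_mul_I {ι : Type*} (s : Finset ι) (c a : ι → ℝ) :
    ‖∑ i ∈ s, (c i : ℂ) * Complex.exp (a i * Complex.I)‖ ^ 2 =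
      ∑ i ∈ s, ∑ j ∈ s, c i * c j * cos (a i - a j) := by
  have hre : (∑ i ∈ s, (c i : ℂ) * Complex.exp (a i * Complex.I)).re =
      ∑ i ∈ s, c i * cos (a i) := by
    simp only [Complex.re_sum, Complex.re_ofReal_mul, Complex.exp_ofReal_mul_I_re]
  have him : (∑ i ∈ s, (c i : ℂ) * Complex.exp (a i * Complex.I)).im =
      ∑ i ∈ s, c i * sin (a i) := by
    simp only [Complex.im_sum, Complex.im_ofReal_mul, Complex.exp_ofReal_mul_I_im]
  rw [Complex.sq_norm, Complex.normSq_apply, hre, him, sum_mul_sum, sum_mul_sum, ← sum_add_distrib]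
  refine sum_congr rfl fun i _ => ?_
  rw [← sum_add_distrib]
  refine sum_congr rfl fun j _ => ?_
  rw [cos_sub]
  ring

theorem hasDerivAt_sum_sum_mul_cos {ι : Type*} (s : Finset ι) (c a : ι → ℝ) (x : ℝ) :
    HasDerivAt (fun x => ∑ i ∈ s, ∑ j ∈ s, c i * c j * cos ((a i - a j) * x))
      (-∑ i ∈ s, ∑ j ∈ s, c i * c j * (a i - a j) * sin ((a i - a j) * x)) x := by
  simp only [← sum_neg_distrib]
  refine HasDerivAt.fun_sum fun i _ => HasDerivAt.fun_sum fun j _ => ?_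
  refine ((((hasDerivAt_id' x).const_mul (a i - a j)).cos).const_mul (c i * c j)).congr_deriv ?_
  ring

theorem sum_range_sum_range_eq_two_mul_sum_Ioo {R : Type*} [NonAssocSemiring R] (M : ℕ)
    (F : ℕ → ℕ → R) (hsymm : ∀ i j, F i j = F j i) (hdiag : ∀ i, F i i = 0) :
    ∑ i ∈ range M, ∑ j ∈ range M, F i j = 2 * ∑ i ∈ range M, ∑ j ∈ Ioo i M, F i j := by
  have hsplit : ∀ i ∈ range M,
      ∑ j ∈ range M, F i j = ∑ j ∈ range i, F i j + ∑ j ∈ Ioo i M, F i j := by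
    intro i hi
    rw [range_eq_Ico, range_eq_Ico, ← sum_Ico_consecutive _ (Nat.zero_le (i + 1)) (mem_range.1 hi),
      sum_Ico_succ_top (Nat.zero_le i), hdiag, add_zero, Ico_add_one_left_eq_Ioo]
  have hlower : ∑ i ∈ range M, ∑ j ∈ range i, F i j = ∑ j ∈ range M, ∑ i ∈ Ioo j M, F j i := by
    rw [sum_comm' (t' := range M) (s' := fun j => Ioo j M)]
    · exact sum_congr rfl fun j _ => sum_congr rfl fun i _ => hsymm i j
    · intro i j
      simp only [mem_range, mem_Ioo]
      omega
  rw [sum_congr rfl hsplit, sum_add_distrib, hlower, two_mul]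

/-- The zero-delay cut `|χ(0, f)|²` of the ambiguity function, up to the factor `1 / (MN)²`, with
`c m` the total sensing power `∑ n, u n m * p n m` of OFDM symbol `m`. -/
noncomputable def dopplerCut (M : ℕ) (T : ℝ) (c : ℕ → ℝ) (f : ℝ) : ℝ :=
  ‖∑ m ∈ range M, (c m : ℂ) * Complex.exp (Complex.I * (2 * π * m * f * T))‖ ^ 2

theorem dopplerCut_eq_sum_sum_mul_cos (M : ℕ) (T : ℝ) (c : ℕ → ℝ) (f : ℝ) :
    dopplerCut M T c f = ∑ m ∈ range M, ∑ m' ∈ range M,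
      c m * c m' * cos ((2 * π * T * m - 2 * π * T * m') * f) := by
  have hexp : ∀ m : ℕ,
      Complex.I * (2 * π * m * f * T) = ((2 * π * T * m * f : ℝ) : ℂ) * Complex.I := fun m => by
    push_cast
    ring
  simp only [dopplerCut, hexp, sq_norm_sum_ofReal_mul_exp_mul_I, sub_mul]

theorem hasDerivAt_dopplerCut (M : ℕ) (T : ℝ) (c : ℕ → ℝ) (f : ℝ) :
    HasDerivAt (dopplerCut M T c)
      (-∑ m ∈ range M, ∑ m' ∈ range M, c m * c m' * (2 * π * T * m - 2 * π * T * m') *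
        sin ((2 * π * T * m - 2 * π * T * m') * f)) f := by
  rw [funext (dopplerCut_eq_sum_sum_mul_cos M T c)]
  exact hasDerivAt_sum_sum_mul_cos (range M) c (fun m => 2 * π * T * m) f

theorem deriv_dopplerCut_half_resolution (M : ℕ) {T : ℝ} (hT : T ≠ 0) (c : ℕ → ℝ) :
    deriv (dopplerCut M T c) (1 / (2 * M * T)) = 4 * π * T * ∑ m ∈ range M, ∑ m' ∈ Ioo m M,
      c m * c m' * ((m' : ℝ) - m) * sin (((m : ℝ) - m') * π / M) := by
  have harg : ∀ m m' : ℕ, m < M →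
      (2 * π * T * m - 2 * π * T * m') * (1 / (2 * M * T)) = ((m : ℝ) - m') * π / M := by
    intro m m' hm
    have : (M : ℝ) ≠ 0 := Nat.cast_ne_zero.2 (by omega)
    field_simp
  rw [(hasDerivAt_dopplerCut M T c _).deriv, sum_range_sum_range_eq_two_mul_sum_Ioo, mul_sum,
    mul_sum, ← sum_neg_distrib]
  · refine sum_congr rfl fun m hm => ?_
    rw [mul_sum, mul_sum, ← sum_neg_distrib]
    refine sum_congr rfl fun m' _ => ?_
    rw [harg m m' (mem_range.1 hm)]
    ring
  · intro i j
    rw [← neg_sub (2 * π * T * i), neg_mul, sin_neg]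
    ring
  · simp

theorem sin_sub_mul_pi_div_neg {m m' M : ℕ} (h : m < m') (h' : m' < M) :
    sin (((m : ℝ) - m') * π / M) < 0 := by
  have hM : (0 : ℝ) < M := by exact_mod_cast (Nat.zero_le m).trans_lt (h.trans h')
  have hlt : (m : ℝ) < m' := by exact_mod_cast h
  have hle : (m' : ℝ) - m < M := by
    have : (m' : ℝ) < M := by exact_mod_cast h'
    linarith [(m.cast_nonneg : (0 : ℝ) ≤ m)]
  apply sin_neg_of_neg_of_neg_pi_lt
  · exact div_neg_of_neg_of_pos (mul_neg_of_neg_of_pos (by linarith) pi_pos) hM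
  · rw [lt_div_iff₀ hM]
    nlinarith [pi_pos]

theorem sum_sum_Ioo_mul_sub_mul_sin_neg (M : ℕ) (c : ℕ → ℝ) (hc : ∀ m < M, 0 ≤ c m) {a b : ℕ}
    (hab : a < b) (hb : b < M) (hca : 0 < c a) (hcb : 0 < c b) :
    ∑ m ∈ range M, ∑ m' ∈ Ioo m M, c m * c m' * ((m' : ℝ) - m) * sin (((m : ℝ) - m') * π / M)
      < 0 := by
  have hgap : ∀ {m m' : ℕ}, m < m' → 0 < (m' : ℝ) - m := fun h => sub_pos.2 (by exact_mod_cast h)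
  refine sum_neg' (fun m hm => sum_nonpos fun m' hm' => ?_)
    ⟨a, mem_range.2 (hab.trans hb), sum_neg' (fun m' hm' => ?_) ⟨b, mem_Ioo.2 ⟨hab, hb⟩, ?_⟩⟩
  · obtain ⟨hmm', hm'M⟩ := mem_Ioo.1 hm'
    exact mul_nonpos_of_nonneg_of_nonpos
      (mul_nonneg (mul_nonneg (hc m (mem_range.1 hm)) (hc m' hm'M)) (hgap hmm').le)
      (sin_sub_mul_pi_div_neg hmm' hm'M).le
  · obtain ⟨ham', hm'M⟩ := mem_Ioo.1 hm'
    exact mul_nonpos_of_nonneg_of_nonpos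
      (mul_nonneg (mul_nonneg hca.le (hc m' hm'M)) (hgap ham').le)
      (sin_sub_mul_pi_div_neg ham' hm'M).le
  · exact mul_neg_of_pos_of_neg (mul_pos (mul_pos hca hcb) (hgap hab))
      (sin_sub_mul_pi_div_neg hab hb)

theorem doppler_mainlobe_deriv_general (N M : ℕ)
    (Tsym : ℝ) (hTsym : 0 < Tsym) (u p : ℕ → ℕ → ℝ) (G : ℝ → ℝ)
    (hG : ∀ f : ℝ, G f =
      ‖∑ m ∈ range M, ∑ n ∈ range N,
        ((u n m * p n m : ℝ) : ℂ) *
          Complex.exp (Complex.I * (2 * π * m * f * Tsym))‖ ^ 2) :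
    Differentiable ℝ G ∧
    deriv G (1 / (2 * M * Tsym)) =
      4 * π * Tsym *
        ∑ n ∈ range N, ∑ n' ∈ range N, ∑ m ∈ range M, ∑ m' ∈ Ioo m M,
          u n m * u n' m' * p n m * p n' m' * ((m' : ℝ) - m) *
            Real.sin (((m : ℝ) - m') * π / M) ∧
    ((∀ n < N, ∀ m < M, u n m = 0 ∨ u n m = 1) →
      (∀ n < N, ∀ m < M, 0 ≤ p n m) →
      ∀ n₁ m₁ n₂ m₂ : ℕ, n₁ < N → m₁ < M → n₂ < N → m₂ < M → m₁ ≠ m₂ →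
        0 < u n₁ m₁ * p n₁ m₁ → 0 < u n₂ m₂ * p n₂ m₂ →
        deriv G (1 / (2 * M * Tsym)) < 0) := by
  set c : ℕ → ℝ := fun m => ∑ n ∈ range N, u n m * p n m
  have hGc : G = dopplerCut M Tsym c := funext fun f => by
    simp only [hG, dopplerCut, c, Complex.ofReal_sum, sum_mul]
  have hf₀ := deriv_dopplerCut_half_resolution M hTsym.ne' c
  rw [← hGc] at hf₀
  refine ⟨hGc ▸ fun f => (hasDerivAt_dopplerCut M Tsym c f).differentiableAt, ?_, ?_⟩
  · rw [hf₀]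
    simp_rw [c, sum_mul_sum, sum_mul, sum_comm (s := range N) (t := range M),
      sum_comm (s := range N) (t := Ioo _ M)]
    congr! 5
    ring
  intro hu hp n₁ m₁ n₂ m₂ hn₁ hm₁ hn₂ hm₂ hne hpos₁ hpos₂
  have hterm_nonneg : ∀ m < M, ∀ n ∈ range N, 0 ≤ u n m * p n m := by
    intro m hm n hn
    rcases hu n (mem_range.1 hn) m hm with h | h <;> simp [h, hp n (mem_range.1 hn) m hm]
  have hc_nonneg : ∀ m < M, 0 ≤ c m := fun m hm => sum_nonneg (hterm_nonneg m hm)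
  have hc_pos : ∀ n m, n < N → m < M → 0 < u n m * p n m → 0 < c m := fun n m hn hm h =>
    h.trans_le (single_le_sum (hterm_nonneg m hm) (mem_range.2 hn))
  rw [hf₀]
  refine mul_neg_of_pos_of_neg (by positivity) ?_
  rcases hne.lt_or_gt with h | h
  · exact sum_sum_Ioo_mul_sub_mul_sin_neg M c hc_nonneg h hm₂ (hc_pos _ _ hn₁ hm₁ hpos₁)
      (hc_pos _ _ hn₂ hm₂ hpos₂)
  · exact sum_sum_Ioo_mul_sub_mul_sin_neg M c hc_nonneg h hm₁ (hc_pos _ _ hn₂ hm₂ hpos₂)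
      (hc_pos _ _ hn₁ hm₁ hpos₁)

/-- Doppler-resolution first-order analysis: `G(f) = |Σ_{m,n} u_{n,m} p_{n,m}
e^{i2πmfT_sym}|²` is differentiable, its derivative at `f₀ = 1/(2MT_sym)` equals
`4πT_sym · Σ_{n,n'} Σ_{m<m'} u_{n,m}u_{n',m'}p_{n,m}p_{n',m'}(m'−m)sin((m−m')π/M)`,
and under Boolean selections, nonnegative powers, and two selected-and-powered
elements on distinct OFDM symbols, this derivative is strictly negative. -/
theorem doppler_mainlobe_deriv (N M : ℕ) (hN : 1 ≤ N) (hM : 2 ≤ M)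
    (Tsym : ℝ) (hTsym : 0 < Tsym) (u p : ℕ → ℕ → ℝ) (G : ℝ → ℝ)
    (hG : ∀ f : ℝ, G f =
      ‖∑ m ∈ range M, ∑ n ∈ range N,
        ((u n m * p n m : ℝ) : ℂ) *
          Complex.exp (Complex.I * (2 * π * m * f * Tsym))‖ ^ 2) :
    Differentiable ℝ G ∧
    deriv G (1 / (2 * M * Tsym)) =
      4 * π * Tsym *
        ∑ n ∈ range N, ∑ n' ∈ range N, ∑ m ∈ range M, ∑ m' ∈ Ioo m M,
          u n m * u n' m' * p n m * p n' m' * ((m' : ℝ) - m) *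
            Real.sin (((m : ℝ) - m') * π / M) ∧
    ((∀ n < N, ∀ m < M, u n m = 0 ∨ u n m = 1) →
      (∀ n < N, ∀ m < M, 0 ≤ p n m) →
      ∀ n₁ m₁ n₂ m₂ : ℕ, n₁ < N → m₁ < M → n₂ < N → m₂ < M → m₁ ≠ m₂ →
        0 < u n₁ m₁ * p n₁ m₁ → 0 < u n₂ m₂ * p n₂ m₂ →
        deriv G (1 / (2 * M * Tsym)) < 0) :=
  doppler_mainlobe_deriv_general N M Tsym hTsym u p G hG
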